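/- arXiv:1904.12928 — 8 statements merged into one kernel-verified Lean document; each statement's English description precedes it below -/
import Mathlib

section
/- Let m be a positive integer, let L¹, L² : ℝ^m → ℝ^m be two maps, and let Δ > 0, α₁ > 0, α₂ > 0 be real constants. Assume: (i) there exists a unique U* ∈ ℝ^m with L²(U*) = 0; (ii) for all U, V ∈ ℝ^m, α₁‖U − V‖ ≤ ‖L¹(U) − L¹(V)‖; (iii) for all U, V ∈ ℝ^m, ‖(L¹(U) − L²(U)) − (L¹(V) − L²(V))‖ ≤ α₂ Δ ‖U − V‖. Let (U^(p))_{p≥0} be any sequence in ℝ^m satisfying the defect-correction relation L¹(U^(p+1)) = L¹(U^(p)) − L²(U^(p)) for all p ≥ 0. If ν = (α₂/α₁)Δ < 1, then for every p ≥ 0, ‖U^(p) − U*‖ ≤ ν^p ‖U^(0) − U*‖; in particular U^(p) converges to U*. -/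
/-- Defect correction convergence (Abgrall): if `L¹` is coercive with constant `α₁`,
`L¹ - L²` is Lipschitz with constant `α₂ Δ`, `U*` is the unique zero of `L²`, and the
sequence `U` satisfies the defect-correction relation, then `U p` converges
geometrically to `U*` with rate `ν = (α₂/α₁) Δ < 1`. -/
theorem stmt_0 (m : ℕ) (hm : 0 < m)
    (L1 L2 : EuclideanSpace ℝ (Fin m) → EuclideanSpace ℝ (Fin m))
    (Δ α₁ α₂ : ℝ) (hΔ : 0 < Δ) (hα₁ : 0 < α₁) (hα₂ : 0 < α₂)
    (Ustar : EuclideanSpace ℝ (Fin m))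
    (hzero : L2 Ustar = 0) (huniq : ∀ V, L2 V = 0 → V = Ustar)
    (hcoercive : ∀ U V, α₁ * ‖U - V‖ ≤ ‖L1 U - L1 V‖)
    (hlip : ∀ U V, ‖(L1 U - L2 U) - (L1 V - L2 V)‖ ≤ α₂ * Δ * ‖U - V‖)
    (U : ℕ → EuclideanSpace ℝ (Fin m))
    (hrec : ∀ p, L1 (U (p + 1)) = L1 (U p) - L2 (U p))
    (hν : α₂ / α₁ * Δ < 1) :
    (∀ p, ‖U p - Ustar‖ ≤ (α₂ / α₁ * Δ) ^ p * ‖U 0 - Ustar‖) ∧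
      Filter.Tendsto U Filter.atTop (nhds Ustar) := by

  have hν0 : 0 ≤ α₂ / α₁ * Δ := by positivity
  have key : ∀ p, ‖U (p+1) - Ustar‖ ≤ (α₂ / α₁ * Δ) * ‖U p - Ustar‖ := by
    intro p
    have h1 : α₁ * ‖U (p+1) - Ustar‖ ≤ ‖L1 (U (p+1)) - L1 Ustar‖ := hcoercive _ _
    have h2 : L1 (U (p+1)) - L1 Ustar = (L1 (U p) - L2 (U p)) - (L1 Ustar - L2 Ustar) := by
      rw [hrec, hzero]; abel
    have h3 : α₁ * ‖U (p+1) - Ustar‖ ≤ α₂ * Δ * ‖U p - Ustar‖ := by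
      calc α₁ * ‖U (p+1) - Ustar‖ ≤ ‖L1 (U (p+1)) - L1 Ustar‖ := h1
        _ = ‖(L1 (U p) - L2 (U p)) - (L1 Ustar - L2 Ustar)‖ := by rw [h2]
        _ ≤ α₂ * Δ * ‖U p - Ustar‖ := hlip _ _
    have h4 : ‖U (p+1) - Ustar‖ ≤ α₂ * Δ * ‖U p - Ustar‖ / α₁ := by
      rw [le_div_iff₀ hα₁]; nlinarith
    calc ‖U (p+1) - Ustar‖ ≤ α₂ * Δ * ‖U p - Ustar‖ / α₁ := h4
      _ = (α₂ / α₁ * Δ) * ‖U p - Ustar‖ := by ring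
  have hgeo : ∀ p, ‖U p - Ustar‖ ≤ (α₂ / α₁ * Δ) ^ p * ‖U 0 - Ustar‖ := by
    intro p
    induction p with
    | zero => simp
    | succ n ih =>
      calc ‖U (n+1) - Ustar‖ ≤ (α₂ / α₁ * Δ) * ‖U n - Ustar‖ := key n
        _ ≤ (α₂ / α₁ * Δ) * ((α₂ / α₁ * Δ) ^ n * ‖U 0 - Ustar‖) := by
            exact mul_le_mul_of_nonneg_left ih hν0
        _ = (α₂ / α₁ * Δ) ^ (n+1) * ‖U 0 - Ustar‖ := by ring
  refine ⟨hgeo, ?_⟩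
  have h0 : Filter.Tendsto (fun p => (α₂ / α₁ * Δ) ^ p * ‖U 0 - Ustar‖) Filter.atTop (nhds 0) := by
    have := tendsto_pow_atTop_nhds_zero_of_lt_one hν0 hν
    simpa using this.mul_const ‖U 0 - Ustar‖
  have hdist : Filter.Tendsto (fun p => ‖U p - Ustar‖) Filter.atTop (nhds 0) := by
    refine squeeze_zero (fun p => norm_nonneg _) hgeo h0
  have := hdist
  rw [← tendsto_sub_nhds_zero_iff]
  exact tendsto_zero_iff_norm_tendsto_zero.2 hdist
end

section
/- Let θ be the real 2×2 matrix θ = [[1/3, −1/24], [2/3, 1/6]]. Its eigenvalues (over ℂ) are 1/4 + i/(4√3) and 1/4 − i/(4√3); in particular, every z ∈ ℂ with det(θ − z·I₂) = 0 satisfies |z| = 1/(2√3), so the spectral radius of θ equals 1/(2√3). -/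
open Real ComplexConjugate

/-! The characteristic polynomial of `θ` is `z² - z/2 + 1/12`, whose discriminant is
`-1/12 = (i/(2√3))²`; its two roots are complex conjugate with squared modulus
`1/16 + 1/48 = 1/12 = (1/(2√3))²`. -/

theorem Matrix.det_sub_smul_one_fin_two {R : Type*} [CommRing R]
    (A : Matrix (Fin 2) (Fin 2) R) (z : R) :
    (A - z • (1 : Matrix (Fin 2) (Fin 2) R)).det = z * z - A.trace * z + A.det := by
  rw [Matrix.det_fin_two, Matrix.det_fin_two, Matrix.trace_fin_two]
  simp only [sub_apply, smul_apply, one_apply_eq, smul_eq_mul, mul_one, ne_eq, zero_ne_one,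
    not_false_eq_true, one_apply_ne, mul_zero, sub_zero, one_ne_zero]
  ring

theorem det_theta_sub_smul_one (z : ℂ) :
    (((!![1/3, -1/24; 2/3, 1/6] : Matrix (Fin 2) (Fin 2) ℝ).map Complex.ofReal) -
        z • (1 : Matrix (Fin 2) (Fin 2) ℂ)).det = z * z - 1/2 * z + 1/12 := by
  rw [Matrix.det_sub_smul_one_fin_two, Matrix.trace_fin_two, Matrix.det_fin_two]
  simp only [Matrix.map_apply, Matrix.of_apply, Matrix.cons_val', Matrix.cons_val_zero,
    Matrix.cons_val_one, Matrix.empty_val', Matrix.cons_val_fin_one]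
  push_cast
  ring

theorem quadratic_half_twelfth_eq_zero_iff (z : ℂ) :
    z * z - 1/2 * z + 1/12 = 0 ↔
      z = 1/4 + Complex.I / (4 * √3) ∨ z = 1/4 - Complex.I / (4 * √3) := by
  have hs : ((√3 : ℝ) : ℂ) ≠ 0 := by exact_mod_cast (Real.sqrt_pos.2 three_pos).ne'
  have hs2 : ((√3 : ℝ) : ℂ) ^ 2 = 3 := by exact_mod_cast Real.sq_sqrt zero_le_three
  have hdiscrim :
      discrim 1 (-1/2) (1/12) = (Complex.I / (2 * √3)) * (Complex.I / (2 * √3)) := by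
    field_simp
    rw [discrim, Complex.I_sq, hs2]
    ring
  convert quadratic_eq_zero_iff one_ne_zero hdiscrim z using 3 <;> ring

theorem norm_quarter_add_I_div : ‖1/4 + Complex.I / (4 * √3)‖ = 1 / (2 * √3) := by
  have hs : 0 < √3 := Real.sqrt_pos.2 three_pos
  have hre_im : (1/4 + Complex.I / (4 * √3) : ℂ) =
      ((1/4 : ℝ) : ℂ) + ((1 / (4 * √3) : ℝ) : ℂ) * Complex.I := by
    push_cast
    ring
  rw [hre_im, Complex.norm_add_mul_I, Real.sqrt_eq_iff_eq_sq (by positivity) (by positivity)]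
  field_simp
  rw [Real.sq_sqrt zero_le_three]
  norm_num

theorem norm_quarter_sub_I_div : ‖1/4 - Complex.I / (4 * √3)‖ = 1 / (2 * √3) := by
  have hconj : conj (1/4 + Complex.I / (4 * √3)) = 1/4 - Complex.I / (4 * √3) := by
    simp [map_div₀, Complex.conj_ofNat, sub_eq_add_neg, neg_div]
  rw [← hconj, Complex.norm_conj, norm_quarter_add_I_div]

/-- The eigenvalues over `ℂ` of `θ = [[1/3, -1/24], [2/3, 1/6]]` are
`1/4 ± i/(4√3)`; in particular every complex eigenvalue has modulus `1/(2√3)`,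
which is thus the spectral radius of `θ`. -/
theorem stmt_8 (θ : Matrix (Fin 2) (Fin 2) ℝ)
    (hθ : θ = !![1/3, -1/24; 2/3, 1/6]) :
    (∀ z : ℂ,
        ((θ.map (Complex.ofReal)) - z • (1 : Matrix (Fin 2) (Fin 2) ℂ)).det = 0 ↔
          (z = 1/4 + Complex.I / (4 * Real.sqrt 3) ∨
            z = 1/4 - Complex.I / (4 * Real.sqrt 3))) ∧
      ∀ z : ℂ,
        ((θ.map (Complex.ofReal)) - z • (1 : Matrix (Fin 2) (Fin 2) ℂ)).det = 0 →
          ‖z‖ = 1 / (2 * Real.sqrt 3) := by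
  subst hθ
  refine ⟨fun z ↦ ?_, fun z hz ↦ ?_⟩
  · rw [det_theta_sub_smul_one, quadratic_half_twelfth_eq_zero_iff]
  · rw [det_theta_sub_smul_one, quadratic_half_twelfth_eq_zero_iff] at hz
    rcases hz with rfl | rfl
    · exact norm_quarter_add_I_div
    · exact norm_quarter_sub_I_div
end

section
/- Let r, s be nonnegative integers with r + s ≥ 1. Define coefficients α_j for −r ≤ j ≤ s by α_j = ((−1)^{j+1}/j) · r! s! / ((r+j)! (s−j)!) for j ≠ 0, and α₀ = −∑_{j=−r, j≠0}^{s} α_j. Then for every polynomial P of degree at most r + s, ∑_{j=−r}^{s} α_j P(j) = P'(0); i.e., the finite-difference operator with these coefficients approximates the first derivative exactly on polynomials of degree up to r + s (it is of order q = r + s). -/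
/-!
Let `L_j` be the Lagrange basis on the nodes `-r, …, s`. Every `P` of degree at most `r + s`
equals its interpolant `∑ P(j) L_j`, so `P'(0) = ∑ P(j) L_j'(0)`. Since `0` is a node, for
`j ≠ 0` only the factor of `L_j` vanishing at `0` contributes to `L_j'(0)`, and the remaining
product of node differences is a ratio of factorials giving `α_j`. Differentiating
`∑ L_j = 1` shows `∑ L_j'(0) = 0`, which gives `L_0'(0) = α_0`.
-/

open Finset Polynomial
open scoped Nat

namespace Lagrange

variable {F ι : Type*} [Field F] [DecidableEq ι] {s : Finset ι} {v : ι → F}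

theorem eval_derivative_eq_sum (hvs : Set.InjOn v s) {P : F[X]} (hP : P.degree < #s) (x : F) :
    (derivative P).eval x =
      ∑ i ∈ s, P.eval (v i) * (derivative (Lagrange.basis s v i)).eval x := by
  conv_lhs => rw [eq_interpolate hvs hP, interpolate_apply]
  simp only [derivative_sum, derivative_C_mul, eval_finsetSum, eval_mul, eval_C]

theorem sum_eval_derivative_basis (hvs : Set.InjOn v s) (hs : s.Nonempty) (x : F) :
    ∑ i ∈ s, (derivative (Lagrange.basis s v i)).eval x = 0 := by
  simpa [eval_finsetSum] using congrArg (fun p => (derivative p).eval x) (sum_basis hvs hs)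

theorem eval_derivative_basis_of_ne {i k : ι} (hk : k ∈ s) (hik : i ≠ k) :
    (derivative (Lagrange.basis s v i)).eval (v k) =
      (v i - v k)⁻¹ * ∏ m ∈ (s.erase i).erase k, (v k - v m) / (v i - v m) := by
  -- the factor vanishing at `v k` must be the one differentiated
  rw [Lagrange.basis, ← mul_prod_erase _ _ (mem_erase.2 ⟨hik.symm, hk⟩), derivative_mul,
    eval_add, eval_mul, eval_mul, eval_basisDivisor_right, zero_mul, add_zero, eval_prod]
  simp [basisDivisor, div_eq_mul_inv, mul_comm]

end Lagrange

theorem prod_Ico_sub_eq_factorial (x : ℤ) (p : ℕ) :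
    ∏ m ∈ Ico (x - p) x, ((x : ℝ) - m) = p ! := by
  induction p with
  | zero => simp
  | succ p ih =>
    rw [show Ico (x - (p + 1 : ℕ)) x = insert (x - (p + 1 : ℕ)) (Ico (x - p) x) by
        ext; simp only [mem_Ico, mem_insert]; omega,
      prod_insert (by simp only [mem_Ico]; omega), ih]
    push_cast [Nat.factorial_succ]
    ring

theorem prod_Ioc_sub_eq_neg_one_pow_mul_factorial (x : ℤ) (q : ℕ) :
    ∏ m ∈ Ioc x (x + q), ((x : ℝ) - m) = (-1) ^ q * q ! := by
  induction q with
  | zero => simp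
  | succ q ih =>
    rw [show Ioc x (x + (q + 1 : ℕ)) = insert (x + (q + 1 : ℕ)) (Ioc x (x + q)) by
        ext; simp only [mem_Ioc, mem_insert]; omega,
      prod_insert (by simp), ih]
    push_cast [Nat.factorial_succ]
    ring

theorem prod_erase_Icc_sub (x : ℤ) (p q : ℕ) :
    ∏ m ∈ (Icc (x - p) (x + q)).erase x, ((x : ℝ) - m) = p ! * ((-1) ^ q * q !) := by
  rw [show (Icc (x - p) (x + q)).erase x = Ico (x - p) x ∪ Ioc x (x + q) by
      ext; simp only [mem_erase, mem_Icc, mem_union, mem_Ico, mem_Ioc]; omega,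
    prod_union (disjoint_left.2 fun m h₁ h₂ => by rw [mem_Ico] at h₁; rw [mem_Ioc] at h₂; omega),
    prod_Ico_sub_eq_factorial, prod_Ioc_sub_eq_neg_one_pow_mul_factorial]

theorem eval_derivative_basis_Icc_zero (r s : ℕ) {j : ℤ} (hj : j ∈ Icc (-(r : ℤ)) s)
    (hj0 : j ≠ 0) :
    (derivative (Lagrange.basis (Icc (-(r : ℤ)) s) ((↑) : ℤ → ℝ) j)).eval 0 =
      (-1 : ℝ) ^ (j + 1) / j * (r ! * s !) / ((r + j).toNat ! * (s - j).toNat !) := by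
  obtain ⟨hrj, hjs⟩ := mem_Icc.1 hj
  obtain ⟨p, hp⟩ := Int.eq_ofNat_of_zero_le (show 0 ≤ (r : ℤ) + j by omega)
  obtain ⟨q, hq⟩ := Int.eq_ofNat_of_zero_le (show 0 ≤ (s : ℤ) - j by omega)
  rw [hp, hq, Int.toNat_natCast, Int.toNat_natCast]
  set S := Icc (-(r : ℤ)) s
  have h0 : (0 : ℤ) ∈ S := mem_Icc.2 ⟨by omega, by omega⟩
  have hnum : (∏ m ∈ (S.erase j).erase 0, -(m : ℝ)) * -j = r ! * ((-1) ^ s * s !) := by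
    rw [erase_right_comm, prod_erase_mul _ (fun m : ℤ => -(m : ℝ)) (mem_erase.2 ⟨hj0, hj⟩)]
    simpa [S] using prod_erase_Icc_sub 0 r s
  have hden : (∏ m ∈ (S.erase j).erase 0, ((j : ℝ) - m)) * j = p ! * ((-1) ^ q * q !) := by
    have := prod_erase_mul _ (fun m : ℤ => (j : ℝ) - m) (mem_erase.2 ⟨hj0.symm, h0⟩)
    rw [Int.cast_zero, sub_zero] at this
    rw [this]
    convert prod_erase_Icc_sub j p q using 3
    simp only [S]
    congr 1 <;> omega
  have hsign : (-1 : ℝ) ^ s = -((-1) ^ (j + 1) * (-1) ^ q) := by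
    rw [← zpow_natCast, ← zpow_natCast, ← zpow_add₀ (by norm_num),
      show j + 1 + (q : ℤ) = s + 1 by omega, zpow_add_one₀ (by norm_num)]
    ring
  rw [← Int.cast_zero (R := ℝ), Lagrange.eval_derivative_basis_of_ne h0 hj0, prod_div_distrib]
  rw [hsign] at hnum
  have hjR : (j : ℝ) ≠ 0 := by exact_mod_cast hj0
  have hprod : ∏ m ∈ (S.erase j).erase 0, ((j : ℝ) - m) ≠ 0 := by
    have : (p ! * ((-1) ^ q * q !) : ℝ) ≠ 0 := by positivity
    exact left_ne_zero_of_mul (hden ▸ this)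
  simp only [Int.cast_zero, zero_sub, sub_zero]
  field_simp
  apply mul_left_cancel₀ hjR
  linear_combination -(p ! * q ! : ℝ) * hnum - ((-1) ^ (j + 1) * r ! * s ! : ℝ) * hden

theorem stmt_11_general (r s : ℕ) (α : ℤ → ℝ)
    (hα : ∀ j ∈ Finset.Icc (-(r : ℤ)) (s : ℤ), j ≠ 0 →
      α j = ((-1 : ℝ) ^ (j + 1) / (j : ℝ)) *
        ((r.factorial : ℝ) * (s.factorial : ℝ)) /
          (((((r : ℤ) + j).toNat.factorial : ℝ)) * ((((s : ℤ) - j).toNat.factorial : ℝ))))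
    (hα₀ : α 0 = -∑ j ∈ (Finset.Icc (-(r : ℤ)) (s : ℤ)).erase 0, α j) :
    ∀ P : Polynomial ℝ, P.natDegree ≤ r + s →
      ∑ j ∈ Finset.Icc (-(r : ℤ)) (s : ℤ), α j * P.eval (j : ℝ) =
        (Polynomial.derivative P).eval 0 := by
  intro P hP
  set S := Icc (-(r : ℤ)) s
  set β : ℤ → ℝ := fun j => (derivative (Lagrange.basis S (↑) j)).eval 0
  have hinj : Set.InjOn ((↑) : ℤ → ℝ) S := Int.cast_injective.injOn
  have h0 : (0 : ℤ) ∈ S := mem_Icc.2 ⟨by omega, by omega⟩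
  have hβ : ∀ j ∈ S, j ≠ 0 → β j = α j := fun j hj hj0 =>
    (eval_derivative_basis_Icc_zero r s hj hj0).trans (hα j hj hj0).symm
  have hβ0 : β 0 = α 0 := by
    have hsum := Lagrange.sum_eval_derivative_basis hinj ⟨0, h0⟩ 0
    rw [← add_sum_erase _ _ h0,
      sum_congr rfl fun j hj => hβ j (mem_of_mem_erase hj) (ne_of_mem_erase hj)] at hsum
    rw [hα₀]
    linarith
  have hdeg : P.degree < #S := by
    rw [Int.card_Icc]
    exact degree_le_natDegree.trans_lt (by exact_mod_cast (show P.natDegree < _ by omega))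
  rw [Lagrange.eval_derivative_eq_sum hinj hdeg]
  refine sum_congr rfl fun j hj => ?_
  rw [mul_comm]
  congr 1
  obtain rfl | hj0 := eq_or_ne j 0
  exacts [hβ0.symm, (hβ j hj hj0).symm]

/-- The Iserles finite-difference coefficients
`α_j = ((-1)^{j+1}/j) r! s! / ((r+j)! (s-j)!)` for `j ≠ 0`,
`α₀ = -∑_{j≠0} α_j`, reproduce the first derivative exactly on polynomials
of degree at most `r + s`: `∑_{j=-r}^{s} α_j P(j) = P'(0)`. -/
theorem stmt_11 (r s : ℕ) (hrs : 1 ≤ r + s) (α : ℤ → ℝ)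
    (hα : ∀ j ∈ Finset.Icc (-(r : ℤ)) (s : ℤ), j ≠ 0 →
      α j = ((-1 : ℝ) ^ (j + 1) / (j : ℝ)) *
        ((r.factorial : ℝ) * (s.factorial : ℝ)) /
          (((((r : ℤ) + j).toNat.factorial : ℝ)) * ((((s : ℤ) - j).toNat.factorial : ℝ))))
    (hα₀ : α 0 = -∑ j ∈ (Finset.Icc (-(r : ℤ)) (s : ℤ)).erase 0, α j) :
    ∀ P : Polynomial ℝ, P.natDegree ≤ r + s →
      ∑ j ∈ Finset.Icc (-(r : ℤ)) (s : ℤ), α j * P.eval (j : ℝ) =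
        (Polynomial.derivative P).eval 0 :=
  stmt_11_general r s α hα hα₀
end

section
/- Let r, s be nonnegative integers with r + s ≥ 1, and let α_j (−r ≤ j ≤ s) be defined by α_j = ((−1)^{j+1}/j) · r! s! / ((r+j)! (s−j)!) for j ≠ 0 and α₀ = −∑_{j≠0} α_j. Then the leading error moment satisfies ∑_{j=−r}^{s} α_j · j^{r+s+1} = (−1)^{s−1} · r! · s!; equivalently, the leading-order error constant c defined by (δu/Δx) − u_x(x_k) = c Δx^{q} u^{(q+1)}(x_k) + O(Δx^{q+1}) with q = r + s equals c = (−1)^{s−1} r! s!/(r+s+1)!. -/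
/-!
Put `q = r + s` and shift the index to `k = j + r ∈ [0, q]`. Then
`(r + j)! (s - j)! = k! (q - k)!`, so
`α_j j^(q+1) = (-1)^(s+1) (r! s! / q!) · (-1)^(q-k) C(q, k) (k - r)^q`;
the `j = 0` term is `0` on both sides since `q ≥ 1`. The alternating binomial sum is the `q`-th
forward difference of `x ↦ x^q` at `-r`, which is `q!`.
-/

open Finset
open scoped Nat

theorem sum_range_neg_one_pow_mul_choose_mul_add_pow {R : Type*} [CommRing R] (n : ℕ) (c : R) :
    ∑ k ∈ range (n + 1), (-1) ^ (n - k) * (n.choose k : R) * (c + k) ^ n = n ! := by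
  have h := fwdDiff_iter_eq_sum_shift 1 (fun x : R ↦ x ^ n) n c
  rw [fwdDiff_iter_eq_factorial] at h
  simpa [zsmul_eq_mul] using h.symm

theorem neg_one_zpow_eq_pow_of_even_sub {α : Type*} [DivisionRing α] {m : ℤ} {n : ℕ}
    (h : Even (m - n)) : (-1 : α) ^ m = (-1) ^ n := by
  rw [← sub_add_cancel m n, zpow_add₀ (neg_ne_zero.mpr one_ne_zero), h.neg_one_zpow, one_mul,
    zpow_natCast]

theorem sum_Icc_neg_natCast_eq_sum_range {M : Type*} [AddCommMonoid M] (f : ℤ → M) (r s : ℕ) :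
    ∑ j ∈ Icc (-(r : ℤ)) s, f j = ∑ k ∈ range (r + s + 1), f (k - r) := by
  refine sum_nbij' (fun j ↦ (j + r).toNat) (fun k ↦ (k : ℤ) - r) ?_ ?_ ?_ ?_ ?_ <;>
    intro a ha <;> simp only [mem_Icc, mem_range] at ha ⊢
  all_goals first | omega | exact congrArg f (by omega)

theorem iserles_coeff_mul_pow {r s k : ℕ} {j : ℤ} (hjk : j + r = k) (hk : k ≤ r + s)
    (hj : j ≠ 0) :
    ((-1 : ℝ) ^ (j + 1) / (j : ℝ)) * ((r ! : ℝ) * (s ! : ℝ)) /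
        ((((r : ℤ) + j).toNat ! : ℝ) * (((s : ℤ) - j).toNat ! : ℝ)) *
        (j : ℝ) ^ (r + s + 1) =
      (-1) ^ (s + 1) * ((r ! * s ! : ℝ) / (r + s)!) *
        ((-1) ^ (r + s - k) * ((r + s).choose k : ℝ) * (-(r : ℝ) + k) ^ (r + s)) := by
  have hj_real : (j : ℝ) = -(r : ℝ) + k := by
    have : (j : ℝ) + r = k := by exact_mod_cast hjk
    linarith
  have hsign : (-1 : ℝ) ^ (j + 1) = (-1) ^ (s + 1 + (r + s - k)) :=
    neg_one_zpow_eq_pow_of_even_sub ⟨k - r - s, by push_cast [Nat.cast_sub hk]; omega⟩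
  have hfac : ((r + s)! : ℝ) = (r + s).choose k * k ! * (r + s - k)! := by
    exact_mod_cast (Nat.choose_mul_factorial_mul_factorial hk).symm
  rw [show ((r : ℤ) + j).toNat = k by omega, show ((s : ℤ) - j).toNat = r + s - k by omega,
    hsign, pow_add, hfac, pow_succ, ← hj_real]
  have : ((r + s).choose k : ℝ) ≠ 0 := by exact_mod_cast (Nat.choose_pos hk).ne'
  have : (j : ℝ) ≠ 0 := by exact_mod_cast hj
  field_simp
  ring

theorem stmt_12_general (r s : ℕ) (hrs : 1 ≤ r + s) (α : ℤ → ℝ)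
    (hα : ∀ j ∈ Finset.Icc (-(r : ℤ)) (s : ℤ), j ≠ 0 →
      α j = ((-1 : ℝ) ^ (j + 1) / (j : ℝ)) *
        ((r.factorial : ℝ) * (s.factorial : ℝ)) /
          (((((r : ℤ) + j).toNat.factorial : ℝ)) * ((((s : ℤ) - j).toNat.factorial : ℝ)))) :
    ∑ j ∈ Finset.Icc (-(r : ℤ)) (s : ℤ), α j * (j : ℝ) ^ (r + s + 1) =
      (-1 : ℝ) ^ ((s : ℤ) - 1) * (r.factorial : ℝ) * (s.factorial : ℝ) := by
  rw [sum_Icc_neg_natCast_eq_sum_range (fun j ↦ α j * (j : ℝ) ^ (r + s + 1))]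
  calc ∑ k ∈ range (r + s + 1), α (k - r) * (((k : ℤ) - r : ℤ) : ℝ) ^ (r + s + 1)
      = ∑ k ∈ range (r + s + 1), (-1) ^ (s + 1) * ((r ! * s ! : ℝ) / (r + s)!) *
          ((-1) ^ (r + s - k) * ((r + s).choose k : ℝ) * (-(r : ℝ) + k) ^ (r + s)) := by
        refine sum_congr rfl fun k hk_mem ↦ ?_
        have hk : k ≤ r + s := Nat.lt_succ_iff.mp (mem_range.mp hk_mem)
        rcases eq_or_ne k r with rfl | hkr
        · simp [zero_pow (show k + s ≠ 0 by omega)]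
        rw [hα _ (by simp only [mem_Icc]; omega) (by omega)]
        exact iserles_coeff_mul_pow (by ring) hk (by omega)
    _ = (-1) ^ (s + 1) * ((r ! * s ! : ℝ) / (r + s)!) * (r + s)! := by
        rw [← mul_sum, sum_range_neg_one_pow_mul_choose_mul_add_pow]
    _ = (-1 : ℝ) ^ ((s : ℤ) - 1) * r ! * s ! := by
        rw [neg_one_zpow_eq_pow_of_even_sub (n := s + 1) ⟨-1, by push_cast; ring⟩]
        field_simp

/-- Leading error moment of the Iserles coefficients: with
`α_j = ((-1)^{j+1}/j) r! s! / ((r+j)! (s-j)!)` for `j ≠ 0` and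
`α₀ = -∑_{j≠0} α_j`, one has `∑_{j=-r}^{s} α_j j^{r+s+1} = (-1)^{s-1} r! s!`,
i.e. the leading error constant is `c = (-1)^{s-1} r! s!/(r+s+1)!`. -/
theorem stmt_12 (r s : ℕ) (hrs : 1 ≤ r + s) (α : ℤ → ℝ)
    (hα : ∀ j ∈ Finset.Icc (-(r : ℤ)) (s : ℤ), j ≠ 0 →
      α j = ((-1 : ℝ) ^ (j + 1) / (j : ℝ)) *
        ((r.factorial : ℝ) * (s.factorial : ℝ)) /
          (((((r : ℤ) + j).toNat.factorial : ℝ)) * ((((s : ℤ) - j).toNat.factorial : ℝ))))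
    (hα₀ : α 0 = -∑ j ∈ (Finset.Icc (-(r : ℤ)) (s : ℤ)).erase 0, α j) :
    ∑ j ∈ Finset.Icc (-(r : ℤ)) (s : ℤ), α j * (j : ℝ) ^ (r + s + 1) =
      (-1 : ℝ) ^ ((s : ℤ) - 1) * (r.factorial : ℝ) * (s.factorial : ℝ) :=
  stmt_12_general r s hrs α hα
end

section
/- For every real θ, the Fourier symbol g₂(θ) = (1/3)e^{iθ} + 1/2 − e^{−iθ} + (1/6)e^{−2iθ} of the third-order upwind-biased spatial operator δ₂ satisfies Re(g₂(θ)) = (1 − cos θ)²/3; in particular Re(g₂(θ)) ≥ 0 for all θ. -/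
open Complex

/-- The Fourier symbol `g₂(θ) = (1/3)e^{iθ} + 1/2 - e^{-iθ} + (1/6)e^{-2iθ}` of the
spatial operator `δ₂` satisfies `Re g₂(θ) = (1 - cos θ)²/3 ≥ 0`. -/
theorem stmt_13 (θ : ℝ) :
    ((1 / 3 : ℂ) * Complex.exp ((θ : ℂ) * Complex.I) + 1 / 2 -
        Complex.exp (-(θ : ℂ) * Complex.I) +
        (1 / 6 : ℂ) * Complex.exp (-2 * (θ : ℂ) * Complex.I)).re =
      (1 - Real.cos θ) ^ 2 / 3 ∧
    0 ≤ ((1 / 3 : ℂ) * Complex.exp ((θ : ℂ) * Complex.I) + 1 / 2 -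
        Complex.exp (-(θ : ℂ) * Complex.I) +
        (1 / 6 : ℂ) * Complex.exp (-2 * (θ : ℂ) * Complex.I)).re := by
  have h : ((1 / 3 : ℂ) * Complex.exp ((θ : ℂ) * Complex.I) + 1 / 2 -
        Complex.exp (-(θ : ℂ) * Complex.I) +
        (1 / 6 : ℂ) * Complex.exp (-2 * (θ : ℂ) * Complex.I)).re =
      (1 - Real.cos θ) ^ 2 / 3 := by
    have e1 : (-(θ : ℂ)) * Complex.I = ((-θ : ℝ) : ℂ) * Complex.I := by push_cast; ring
    have e2 : (-2 : ℂ) * (θ : ℂ) * Complex.I = ((-2 * θ : ℝ) : ℂ) * Complex.I := by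
      push_cast; ring
    rw [e1, e2]
    simp only [Complex.add_re, Complex.sub_re, Complex.mul_re, Complex.exp_ofReal_mul_I_re,
      Complex.exp_ofReal_mul_I_im, Complex.ofReal_re, Complex.ofReal_im]
    norm_num
    rw [Real.cos_two_mul]
    ring
  exact ⟨h, h ▸ by positivity⟩
end

section
/- For every real θ, the Fourier symbol g₃²(θ) = (1/4)e^{iθ} + 5/6 − (3/2)e^{−iθ} + (1/2)e^{−2iθ} − (1/12)e^{−3iθ} of the fourth-order upwind-biased spatial operator δ₃² satisfies Re(g₃²(θ)) = (1 − cos θ)³/3; in particular Re(g₃²(θ)) ≥ 0 for all θ. -/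
/-- The Fourier symbol
`g₃²(θ) = (1/4)e^{iθ} + 5/6 - (3/2)e^{-iθ} + (1/2)e^{-2iθ} - (1/12)e^{-3iθ}`
of the spatial operator `δ₃²` satisfies `Re g₃²(θ) = (1 - cos θ)³/3 ≥ 0`. -/
theorem stmt_14 (θ : ℝ) :
    ((1 / 4 : ℂ) * Complex.exp ((θ : ℂ) * Complex.I) + 5 / 6 -
        (3 / 2 : ℂ) * Complex.exp (-(θ : ℂ) * Complex.I) +
        (1 / 2 : ℂ) * Complex.exp (-2 * (θ : ℂ) * Complex.I) -
        (1 / 12 : ℂ) * Complex.exp (-3 * (θ : ℂ) * Complex.I)).re =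
      (1 - Real.cos θ) ^ 3 / 3 ∧
    0 ≤ ((1 / 4 : ℂ) * Complex.exp ((θ : ℂ) * Complex.I) + 5 / 6 -
        (3 / 2 : ℂ) * Complex.exp (-(θ : ℂ) * Complex.I) +
        (1 / 2 : ℂ) * Complex.exp (-2 * (θ : ℂ) * Complex.I) -
        (1 / 12 : ℂ) * Complex.exp (-3 * (θ : ℂ) * Complex.I)).re := by
  have key : ((1 / 4 : ℂ) * Complex.exp ((θ : ℂ) * Complex.I) + 5 / 6 -
        (3 / 2 : ℂ) * Complex.exp (-(θ : ℂ) * Complex.I) +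
        (1 / 2 : ℂ) * Complex.exp (-2 * (θ : ℂ) * Complex.I) -
        (1 / 12 : ℂ) * Complex.exp (-3 * (θ : ℂ) * Complex.I)).re =
      (1 - Real.cos θ) ^ 3 / 3 := by
    have h1 : (-(θ : ℂ)) * Complex.I = ((-θ : ℝ) : ℂ) * Complex.I := by push_cast; ring
    have h2 : (-2 * (θ : ℂ)) * Complex.I = ((-(2*θ) : ℝ) : ℂ) * Complex.I := by
      push_cast; ring
    have h3 : (-3 * (θ : ℂ)) * Complex.I = ((-(3*θ) : ℝ) : ℂ) * Complex.I := by
      push_cast; ring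
    rw [h1, h2, h3]
    simp only [Complex.add_re, Complex.sub_re, Complex.mul_re,
      Complex.exp_ofReal_mul_I_re, Complex.exp_ofReal_mul_I_im]
    norm_num
    rw [Real.cos_three_mul, Real.cos_two_mul]
    ring
  refine ⟨key, key ▸ ?_⟩
  have := Real.cos_le_one θ
  exact div_nonneg (pow_nonneg (by linarith) 3) (by norm_num)
end

section
/- For every λ ≥ 0 and every θ ∈ ℝ, with g₂(θ) = (1/3)e^{iθ} + 1/2 − e^{−iθ} + (1/6)e^{−2iθ}, one has 1 + (λ/2)g₂(θ) ≠ 0 and |(1 − (λ/2)g₂(θ))/(1 + (λ/2)g₂(θ))| ≤ 1. That is, the Crank–Nicolson time discretisation combined with the spatial operator δ₂ is unconditionally von Neumann stable. -/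
/-!
The real part of `g₂(θ)` is `(1 - cos θ)² / 3 ≥ 0`, so for `λ ≥ 0` the point `z = (λ/2) g₂(θ)`
lies in the closed right half-plane, which the Cayley map `z ↦ (1 - z)/(1 + z)` sends into the
closed unit disc because `‖1 + z‖² - ‖1 - z‖² = 4 re z`.
-/

open Complex

namespace Complex

theorem one_add_ne_zero_of_re_nonneg {z : ℂ} (hz : 0 ≤ z.re) : 1 + z ≠ 0 := by
  intro h
  have := congrArg re h
  simp only [add_re, one_re, zero_re] at this
  linarith

theorem norm_one_sub_le_norm_one_add_of_re_nonneg {z : ℂ} (hz : 0 ≤ z.re) :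
    ‖1 - z‖ ≤ ‖1 + z‖ := by
  have hsq : normSq (1 - z) ≤ normSq (1 + z) := by
    simp only [normSq_apply, add_re, add_im, sub_re, sub_im, one_re, one_im]
    nlinarith
  rw [← Real.sqrt_le_sqrt_iff (normSq_nonneg _)] at hsq
  simpa only [← norm_def] using hsq

theorem norm_one_sub_div_one_add_le_one_of_re_nonneg {z : ℂ} (hz : 0 ≤ z.re) :
    ‖(1 - z) / (1 + z)‖ ≤ 1 := by
  rw [norm_div, div_le_one (norm_pos_iff.mpr (one_add_ne_zero_of_re_nonneg hz))]
  exact norm_one_sub_le_norm_one_add_of_re_nonneg hz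

end Complex

/-- The Fourier symbol `g₂` of the spatial operator `δ₂`. -/
noncomputable def deltaTwoSymbol (θ : ℝ) : ℂ :=
  (1 / 3 : ℂ) * exp ((θ : ℂ) * I) + 1 / 2 - exp (-(θ : ℂ) * I) +
    (1 / 6 : ℂ) * exp (-2 * (θ : ℂ) * I)

theorem deltaTwoSymbol_re (θ : ℝ) : (deltaTwoSymbol θ).re = (1 - Real.cos θ) ^ 2 / 3 := by
  have hexp : ∀ t : ℝ, (exp ((t : ℂ) * I)).re = Real.cos t := exp_ofReal_mul_I_re
  have h₁ := hexp (-θ)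
  have h₂ := hexp (-2 * θ)
  push_cast at h₁ h₂
  simp only [deltaTwoSymbol, add_re, sub_re, mul_re, hexp, h₁, h₂, div_ofNat_re, div_ofNat_im,
    one_re, one_im]
  rw [Real.cos_neg, neg_mul, Real.cos_neg, Real.cos_two_mul]
  ring

/-- Unconditional von Neumann stability of Crank–Nicolson with the spatial
operator `δ₂`: for every `λ ≥ 0` and `θ`, with
`g₂(θ) = (1/3)e^{iθ} + 1/2 - e^{-iθ} + (1/6)e^{-2iθ}`, one has
`1 + (λ/2) g₂(θ) ≠ 0` and `|(1 - (λ/2) g₂(θ))/(1 + (λ/2) g₂(θ))| ≤ 1`. -/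
theorem stmt_16 (lam : ℝ) (hlam : 0 ≤ lam) (θ : ℝ) :
    1 + ((lam : ℂ) / 2) * ((1 / 3 : ℂ) * Complex.exp ((θ : ℂ) * Complex.I) + 1 / 2 -
        Complex.exp (-(θ : ℂ) * Complex.I) +
        (1 / 6 : ℂ) * Complex.exp (-2 * (θ : ℂ) * Complex.I)) ≠ 0 ∧
      ‖(1 - ((lam : ℂ) / 2) * ((1 / 3 : ℂ) * Complex.exp ((θ : ℂ) * Complex.I) + 1 / 2 -
            Complex.exp (-(θ : ℂ) * Complex.I) +
            (1 / 6 : ℂ) * Complex.exp (-2 * (θ : ℂ) * Complex.I))) /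
          (1 + ((lam : ℂ) / 2) * ((1 / 3 : ℂ) * Complex.exp ((θ : ℂ) * Complex.I) + 1 / 2 -
            Complex.exp (-(θ : ℂ) * Complex.I) +
            (1 / 6 : ℂ) * Complex.exp (-2 * (θ : ℂ) * Complex.I)))‖ ≤ 1 := by
  have hre : 0 ≤ ((lam : ℂ) / 2 * deltaTwoSymbol θ).re := by
    rw [← ofReal_ofNat, ← ofReal_div, re_ofReal_mul, deltaTwoSymbol_re]
    positivity
  exact ⟨one_add_ne_zero_of_re_nonneg hre, norm_one_sub_div_one_add_le_one_of_re_nonneg hre⟩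
end

section
/- For every w ∈ ℂ, the identity |w² + 6w + 12|² − |w² − 6w + 12|² = 24·Re(w)·(|w|² + 12) holds. Consequently, if Re(w) ≥ 0 and w² + 6w + 12 ≠ 0, then the amplification factor G₂ = (w² − 6w + 12)/(w² + 6w + 12) of the third-order-in-time scheme at the full time step satisfies |G₂| ≤ 1. -/
/-! With `p = w² + b` and `q = a w`, the difference `‖p + q‖² - ‖p - q‖²` equals
`4 Re(p q̄) = 4 a Re(w) (|w|² + b)`, which is nonnegative when `a, b, Re w ≥ 0`;
so the numerator of `G₂` is dominated by its denominator. -/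

theorem Complex.sq_norm_add_sub_sq_norm_sub (a b : ℝ) (w : ℂ) :
    ‖w ^ 2 + a * w + b‖ ^ 2 - ‖w ^ 2 - a * w + b‖ ^ 2 =
      4 * a * w.re * (‖w‖ ^ 2 + b) := by
  simp only [Complex.sq_norm, normSq_apply]
  simp only [sq, add_re, add_im, sub_re, sub_im, mul_re, mul_im, ofReal_re, ofReal_im]
  ring

theorem Complex.norm_div_le_one_of_re_nonneg {a b : ℝ} (ha : 0 ≤ a) (hb : 0 ≤ b) {w : ℂ}
    (hw : 0 ≤ w.re) : ‖(w ^ 2 - a * w + b) / (w ^ 2 + a * w + b)‖ ≤ 1 := by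
  have hsq : ‖w ^ 2 - a * w + b‖ ^ 2 ≤ ‖w ^ 2 + a * w + b‖ ^ 2 := by
    have := sq_norm_add_sub_sq_norm_sub a b w
    have : 0 ≤ 4 * a * w.re * (‖w‖ ^ 2 + b) := by positivity
    linarith
  rw [norm_div]
  exact div_le_one_of_le₀ (pow_le_pow_iff_left₀ (norm_nonneg _) (norm_nonneg _) two_ne_zero
    |>.mp hsq) (norm_nonneg _)

/-- `|w² + 6w + 12|² - |w² - 6w + 12|² = 24 Re(w)(|w|² + 12)`; hence if
`Re w ≥ 0` and `w² + 6w + 12 ≠ 0`, the third-order amplification factor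
`G₂ = (w² - 6w + 12)/(w² + 6w + 12)` satisfies `|G₂| ≤ 1`. -/
theorem stmt_18 (w : ℂ) :
    (‖w ^ 2 + 6 * w + 12‖ ^ 2 - ‖w ^ 2 - 6 * w + 12‖ ^ 2 =
        24 * w.re * (‖w‖ ^ 2 + 12)) ∧
      (0 ≤ w.re → w ^ 2 + 6 * w + 12 ≠ 0 →
        ‖(w ^ 2 - 6 * w + 12) / (w ^ 2 + 6 * w + 12)‖ ≤ 1) := by
  refine ⟨?_, fun hw _ => ?_⟩
  · have := Complex.sq_norm_add_sub_sq_norm_sub 6 12 w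
    push_cast at this
    linarith
  · have := Complex.norm_div_le_one_of_re_nonneg (a := 6) (b := 12) (by norm_num) (by norm_num) hw
    push_cast at this
    exact this
end
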